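/- Let H be a finite-dimensional Hopf algebra over k and A|B an H-Galois extension with centralizer R. The Galois isomorphism β restricts to a bijection T = (A ⊗_B A)^B ≅ R ⊗_k H, and the induced multiplication on R ⊗ H (from the opposite ring of T with product tt' = t'^1 t^1 ⊗ t^2 t'^2) is given by (r ⊗ h)(r' ⊗ h') = r'(r ◁ h'_{(1)}) ⊗ h h'_{(2)}, where ◁ is the Miyashita-Ulbrich action; hence T^{op} ≅ R ⋊ H^{op} as rings. -/

import Mathlib

open TensorProduct

noncomputable section

namespace D2

variable (A : Type*) [Ring A] (B : Subring A)

/-- The defining relations of `A ⊗_B A` as a quotient of `A ⊗_ℤ A`. -/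
def relSub : Submodule ℤ (A ⊗[ℤ] A) :=
  Submodule.span ℤ {x | ∃ (a c : A) (b : B), x = (a * (b : A)) ⊗ₜ[ℤ] c - a ⊗ₜ[ℤ] ((b : A) * c)}

/-- The tensor square `A ⊗_B A` of a ring extension `B ⊆ A`. -/
abbrev TensorSq := (A ⊗[ℤ] A) ⧸ relSub A B

/-- The class of a simple tensor `a ⊗_B c`. -/
def tmulB (a c : A) : TensorSq A B := Submodule.Quotient.mk (a ⊗ₜ[ℤ] c)

/-- Left multiplication `a₀ • (x ⊗ y) = (a₀ x) ⊗ y` on `A ⊗_B A`. -/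
def lmul (a : A) : TensorSq A B →ₗ[ℤ] TensorSq A B :=
  Submodule.mapQ _ _ (TensorProduct.map (LinearMap.mulLeft ℤ a) LinearMap.id) (by
    rw [relSub, Submodule.span_le]
    rintro x ⟨a', c, b, rfl⟩
    simp only [SetLike.mem_coe, Submodule.mem_comap, map_sub, TensorProduct.map_tmul,
      LinearMap.mulLeft_apply, LinearMap.id_apply]
    exact Submodule.subset_span ⟨a * a', c, b, (map_sub (TensorProduct.map (LinearMap.mulLeft ℤ a) LinearMap.id) _ _).trans (by simp [mul_assoc])⟩)

/-- Right multiplication `(x ⊗ y) • a₀ = x ⊗ (y a₀)` on `A ⊗_B A`. -/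
def rmul (a : A) : TensorSq A B →ₗ[ℤ] TensorSq A B :=
  Submodule.mapQ _ _ (TensorProduct.map LinearMap.id (LinearMap.mulRight ℤ a)) (by
    rw [relSub, Submodule.span_le]
    rintro x ⟨a', c, b, rfl⟩
    simp only [SetLike.mem_coe, Submodule.mem_comap, map_sub, TensorProduct.map_tmul,
      LinearMap.mulRight_apply, LinearMap.id_apply]
    exact Submodule.subset_span ⟨a', c * a, b, (map_sub (TensorProduct.map LinearMap.id (LinearMap.mulRight ℤ a)) _ _).trans (by simp [mul_assoc])⟩)

/-- The multiplication map `A ⊗_B A → A`, `x ⊗ y ↦ x y`. -/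
def mulQ : TensorSq A B →ₗ[ℤ] A :=
  Submodule.liftQ _ (LinearMap.mul' ℤ A) (by
    rw [relSub, Submodule.span_le]
    rintro x ⟨a, c, b, rfl⟩
    exact (map_sub (LinearMap.mul' ℤ A) _ _).trans (by simp [mul_assoc]))

/-- An element `t` of `A ⊗_B A` is `B`-central when `b t = t b` for all `b ∈ B`. -/
def IsBCentral (t : TensorSq A B) : Prop := ∀ b ∈ B, lmul A B b t = rmul A B b t

/-- An element `t` of `A ⊗_B A` is `A`-central (a Casimir element) when `a t = t a`. -/
def IsACentral (t : TensorSq A B) : Prop := ∀ a : A, lmul A B a t = rmul A B a t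

/-- A `B`-`B`-bimodule endomorphism of `A`. -/
def IsBB (α : A →ₗ[ℤ] A) : Prop :=
  ∀ b ∈ B, ∀ a : A, α ((b : A) * a) = b * α a ∧ α (a * b) = α a * b

/-- A right `B`-module endomorphism of `A`. -/
def IsRightB (f : A →ₗ[ℤ] A) : Prop := ∀ a : A, ∀ b ∈ B, f (a * b) = f a * b

/-- `x ↦ (x·) ⊗ id` as a linear map, used to build Sweedler-type expressions. -/
def lmulTen : A →ₗ[ℤ] (A ⊗[ℤ] A) →ₗ[ℤ] (A ⊗[ℤ] A) where
  toFun a := TensorProduct.map (LinearMap.mulLeft ℤ a) LinearMap.id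
  map_add' a a' := by
    apply TensorProduct.ext'
    intro x y
    simp [add_mul, TensorProduct.add_tmul]
    rfl
  map_smul' z a := by
    apply TensorProduct.ext'
    intro x y
    simp only [TensorProduct.map_tmul, LinearMap.mulLeft_apply, LinearMap.id_apply,
      LinearMap.smul_apply, RingHom.id_apply, smul_mul_assoc, TensorProduct.smul_tmul']
    rfl

/-- For `ζ = Σ u ⊗ v`, the map `a ↦ Σ α(a u) v`, i.e. `α(? ζ¹) ζ²`. -/
def sweed (α : A →ₗ[ℤ] A) (ζ : A ⊗[ℤ] A) : A →ₗ[ℤ] A :=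
  ((LinearMap.mul' ℤ A).comp (TensorProduct.map α LinearMap.id)).comp ((lmulTen A).flip ζ)

/-- For `ζ = Σ u ⊗ v`, the element `Σ u r v` ("sandwich" evaluation `ζ¹ r ζ²`). -/
def sandw (r : A) (ζ : A ⊗[ℤ] A) : A :=
  (LinearMap.mul' ℤ A) ((TensorProduct.map (LinearMap.mulRight ℤ r) LinearMap.id) ζ)

/-- `mul₂ ζ ξ = Σ (u x) ⊗ (y v)` for `ζ = Σ u ⊗ v`, `ξ = Σ x ⊗ y`:
the product `ξ ·_T ζ` of two elements of `T = (A ⊗_B A)^B` on representatives. -/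
def mul₂ : (A ⊗[ℤ] A) →ₗ[ℤ] (A ⊗[ℤ] A) →ₗ[ℤ] (A ⊗[ℤ] A) :=
  TensorProduct.lift <| LinearMap.mk₂ ℤ
    (fun u v => TensorProduct.map (LinearMap.mulLeft ℤ u) (LinearMap.mulRight ℤ v))
    (fun u u' v => by
      apply TensorProduct.ext'
      intro x y
      simp [add_mul, TensorProduct.add_tmul]
      rfl)
    (fun z u v => by
      apply TensorProduct.ext'
      intro x y
      simp only [TensorProduct.map_tmul, LinearMap.mulLeft_apply, LinearMap.mulRight_apply,
        LinearMap.smul_apply, smul_mul_assoc, TensorProduct.smul_tmul']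
      rfl)
    (fun u v v' => by
      apply TensorProduct.ext'
      intro x y
      simp [mul_add, TensorProduct.tmul_add]
      rfl)
    (fun z u v => by
      apply TensorProduct.ext'
      intro x y
      simp only [TensorProduct.map_tmul, LinearMap.mulLeft_apply, LinearMap.mulRight_apply,
        LinearMap.smul_apply, mul_smul_comm, TensorProduct.tmul_smul]
      rfl)

/-- `A` is balanced as a right `B`-module. -/
def RightBalanced : Prop :=
  ∀ φ : A →+ A,
    (∀ f : A →+ A, (∀ a : A, ∀ b ∈ B, f (a * b) = f a * b) → ∀ a, φ (f a) = f (φ a)) →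
    ∃ b ∈ B, ∀ a, φ a = a * b

end D2

end


open TensorProduct

noncomputable section

/-- The action of a functional `p ∈ H*` on a right `H`-comodule algebra `A`:
`p · a = a₍₀₎ p(a₍₁₎)`. -/
def pact {k A H : Type*} [CommRing k] [Ring A] [Algebra k A] [Ring H] [Algebra k H]
    (ρ : A →ₐ[k] A ⊗[k] H) (p : H →ₗ[k] k) (a : A) : A :=
  (TensorProduct.rid k A) ((LinearMap.lTensor A p) (ρ a))

/-- The centralizer of `B` in `A` as a `k`-submodule of `A`. -/
def centralizerSubmodule (k : Type*) {A : Type*} [CommRing k] [Ring A] [Algebra k A]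
    (B : Subring A) : Submodule k A where
  carrier := Subring.centralizer (B : Set A)
  add_mem' := add_mem
  zero_mem' := zero_mem _
  smul_mem' := by
    intro c x hx
    rw [SetLike.mem_coe, Subring.mem_centralizer_iff] at hx ⊢
    intro g hg
    rw [mul_smul_comm, smul_mul_assoc, hx g hg]


open TensorProduct

noncomputable section
namespace Aux

variable {k : Type*} [Field k] {H : Type*} [Ring H] [HopfAlgebra k H]
    {A : Type*} [Ring A] [Algebra k A]

/-- coefficient map `id ⊗ p`. -/
def coeffL (p : H →ₗ[k] k) : A ⊗[k] H →ₗ[k] A :=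
  (TensorProduct.rid k A).toLinearMap ∘ₗ LinearMap.lTensor A p

@[simp] lemma coeffL_tmul (p : H →ₗ[k] k) (a : A) (g : H) :
    coeffL p (a ⊗ₜ[k] g) = p g • a := by
  simp [coeffL]

def pactL (ρ : A →ₐ[k] A ⊗[k] H) (p : H →ₗ[k] k) : A →ₗ[k] A :=
  coeffL p ∘ₗ ρ.toLinearMap

def Lfun (p : H →ₗ[k] k) : H →ₗ[k] H :=
  (TensorProduct.rid k H).toLinearMap ∘ₗ LinearMap.lTensor H p ∘ₗ
    (Coalgebra.comul (R := k) (A := H))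

lemma coeffL_tmul_one_mul (p : H →ₗ[k] k) (a : A) (w : A ⊗[k] H) :
    coeffL p ((a ⊗ₜ[k] (1 : H)) * w) = a * coeffL p w := by
  induction w using TensorProduct.induction_on with
  | zero => simp
  | tmul x g => simp [Algebra.TensorProduct.tmul_mul_tmul, mul_smul_comm]
  | add u v hu hv => rw [mul_add, map_add, hu, hv, map_add, mul_add]

lemma coeffL_mul_tmul_one (p : H →ₗ[k] k) (a : A) (w : A ⊗[k] H) :
    coeffL p (w * (a ⊗ₜ[k] (1 : H))) = coeffL p w * a := by
  induction w using TensorProduct.induction_on with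
  | zero => simp
  | tmul x g => simp [Algebra.TensorProduct.tmul_mul_tmul, smul_mul_assoc]
  | add u v hu hv => rw [add_mul, map_add, hu, hv, map_add, add_mul]

lemma lTensor_tmul_one_mul (f : H →ₗ[k] H) (a : A) (w : A ⊗[k] H) :
    LinearMap.lTensor A f ((a ⊗ₜ[k] (1 : H)) * w)
      = (a ⊗ₜ[k] (1 : H)) * LinearMap.lTensor A f w := by
  induction w using TensorProduct.induction_on with
  | zero => simp
  | tmul x g => simp [Algebra.TensorProduct.tmul_mul_tmul]
  | add u v hu hv => rw [mul_add, map_add, hu, map_add, hv, mul_add]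

lemma basis_decomp [FiniteDimensional k H] (w : A ⊗[k] H) :
    w = ∑ i, (coeffL ((Module.finBasis k H).coord i) w) ⊗ₜ[k] (Module.finBasis k H i) := by
  set b := Module.finBasis k H
  induction w using TensorProduct.induction_on with
  | zero => simp
  | tmul a g =>
      simp only [coeffL_tmul, Module.Basis.coord_apply]
      calc a ⊗ₜ[k] g = a ⊗ₜ[k] (∑ i, b.repr g i • b i) := by rw [Module.Basis.sum_repr]
        _ = ∑ i, (b.repr g i • a) ⊗ₜ[k] b i := by
            rw [tmul_sum]; exact Finset.sum_congr rfl fun i _ => by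
              rw [tmul_smul, smul_tmul']
  | add u v hu hv =>
      conv_lhs => rw [hu, hv]
      rw [← Finset.sum_add_distrib]
      refine Finset.sum_congr rfl fun i _ => ?_
      rw [map_add, add_tmul]

lemma coeffL_ext [FiniteDimensional k H] {w₁ w₂ : A ⊗[k] H}
    (h : ∀ p : H →ₗ[k] k, coeffL p w₁ = coeffL p w₂) : w₁ = w₂ := by
  rw [basis_decomp w₁, basis_decomp w₂]
  exact Finset.sum_congr rfl fun i _ => by rw [h]

end Aux
end

noncomputable section
namespace Aux
variable {k : Type*} [Field k] {H : Type*} [Ring H] [HopfAlgebra k H]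
    {A : Type*} [Ring A] [Algebra k A]

lemma rho_coeffL (ρ : A →ₐ[k] A ⊗[k] H) (p : H →ₗ[k] k) (w : A ⊗[k] H) :
    ρ (coeffL p w) =
      (coeffL (A := A ⊗[k] H) p) (LinearMap.rTensor H ρ.toLinearMap w) := by
  induction w using TensorProduct.induction_on with
  | zero => simp
  | tmul a g => simp
  | add u v hu hv => rw [map_add, map_add, hu, hv, map_add, map_add]

lemma coeffL_assoc_symm (p : H →ₗ[k] k) :
    (coeffL (A := A ⊗[k] H) p) ∘ₗ (TensorProduct.assoc k A H H).symm.toLinearMap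
      = LinearMap.lTensor A (coeffL (A := H) p) := by
  refine TensorProduct.ext' fun a w => ?_
  induction w using TensorProduct.induction_on with
  | zero => rw [tmul_zero, map_zero, map_zero]
  | tmul g₁ g₂ => simp [TensorProduct.tmul_smul]
  | add x y hx hy => simp only [tmul_add, map_add, hx, hy]

lemma rho_pactL (ρ : A →ₐ[k] A ⊗[k] H)
    (hcoassoc : ∀ a : A,
      (TensorProduct.assoc k A H H) ((LinearMap.rTensor H ρ.toLinearMap) (ρ a)) =
        (LinearMap.lTensor A (Coalgebra.comul (R := k) (A := H))) (ρ a))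
    (p : H →ₗ[k] k) (a : A) :
    ρ (pactL ρ p a) = LinearMap.lTensor A (Lfun p) (ρ a) := by
  have h1 : LinearMap.rTensor H ρ.toLinearMap (ρ a)
      = (TensorProduct.assoc k A H H).symm
          ((LinearMap.lTensor A (Coalgebra.comul (R := k) (A := H))) (ρ a)) := by
    rw [← hcoassoc a, LinearEquiv.symm_apply_apply]
  have : pactL ρ p a = coeffL p (ρ a) := rfl
  rw [this, rho_coeffL, h1]
  have h2 := congrFun (congrArg DFunLike.coe (coeffL_assoc_symm (A := A) p))
    ((LinearMap.lTensor A (Coalgebra.comul (R := k) (A := H))) (ρ a))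
  simp only [LinearMap.comp_apply, LinearEquiv.coe_coe] at h2
  rw [h2, ← LinearMap.comp_apply, ← LinearMap.lTensor_comp]
  rfl

end Aux
end

noncomputable section
namespace Aux
variable {k : Type*} [Field k] {H : Type*} [Ring H] [HopfAlgebra k H]
    {A : Type*} [Ring A] [Algebra k A]

lemma tmul_one_mul (a : A) (w : A ⊗[k] H) :
    (a ⊗ₜ[k] (1 : H)) * w
      = TensorProduct.map (LinearMap.mulLeft k a) LinearMap.id w := by
  induction w using TensorProduct.induction_on with
  | zero => simp
  | tmul x g => simp [Algebra.TensorProduct.tmul_mul_tmul]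
  | add u v hu hv => rw [mul_add, hu, hv, map_add]

section
variable (ρ : A →ₐ[k] A ⊗[k] H) (B : Subring A)
    (βf : D2.TensorSq A B →+ (A ⊗[k] H))
    (hβ : ∀ a a' : A, βf (D2.tmulB A B a a') =
      (TensorProduct.map (LinearMap.mulLeft k a) LinearMap.id) (ρ a'))

include hβ

lemma βf_tmul (a a' : A) :
    βf (Submodule.Quotient.mk (a ⊗ₜ[ℤ] a')) = (a ⊗ₜ[k] (1 : H)) * ρ a' := by
  rw [tmul_one_mul]; exact hβ a a'

lemma βf_mapleft (a : A) (ζ : A ⊗[ℤ] A) :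
    βf (Submodule.Quotient.mk
        (TensorProduct.map (LinearMap.mulLeft ℤ a) LinearMap.id ζ))
      = (a ⊗ₜ[k] (1 : H)) * βf (Submodule.Quotient.mk ζ) := by
  induction ζ using TensorProduct.induction_on with
  | zero => simp
  | tmul x y =>
      rw [TensorProduct.map_tmul]
      simp only [LinearMap.mulLeft_apply, LinearMap.id_apply]
      rw [βf_tmul ρ B βf hβ, βf_tmul ρ B βf hβ, ← mul_assoc,
        Algebra.TensorProduct.tmul_mul_tmul, one_mul]
  | add u v hu hv =>
      rw [map_add, Submodule.Quotient.mk_add, map_add, hu, hv,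
        Submodule.Quotient.mk_add, map_add, mul_add]

lemma βf_mapright (a : A) (ζ : A ⊗[ℤ] A) :
    βf (Submodule.Quotient.mk
        (TensorProduct.map LinearMap.id (LinearMap.mulRight ℤ a) ζ))
      = βf (Submodule.Quotient.mk ζ) * ρ a := by
  induction ζ using TensorProduct.induction_on with
  | zero => simp
  | tmul x y =>
      rw [TensorProduct.map_tmul]
      simp only [LinearMap.mulRight_apply, LinearMap.id_apply]
      rw [βf_tmul ρ B βf hβ, βf_tmul ρ B βf hβ, map_mul, mul_assoc]
  | add u v hu hv =>
      rw [map_add, Submodule.Quotient.mk_add, map_add, hu, hv,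
        Submodule.Quotient.mk_add, map_add, add_mul]

lemma βf_lmul (a : A) (ζ : A ⊗[ℤ] A) :
    βf (D2.lmul A B a (Submodule.Quotient.mk ζ))
      = (a ⊗ₜ[k] (1 : H)) * βf (Submodule.Quotient.mk ζ) := by
  exact βf_mapleft ρ B βf hβ a ζ

lemma βf_rmul (a : A) (ζ : A ⊗[ℤ] A) :
    βf (D2.rmul A B a (Submodule.Quotient.mk ζ))
      = βf (Submodule.Quotient.mk ζ) * ρ a := by
  exact βf_mapright ρ B βf hβ a ζ

end
end Aux
end



noncomputable section
namespace Aux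
variable {k : Type*} [Field k] {H : Type*} [Ring H] [HopfAlgebra k H]
    {A : Type*} [Ring A] [Algebra k A]

/-- The sandwich map as a linear map. -/
def sandwL (r : A) : A ⊗[ℤ] A →ₗ[ℤ] A :=
  (LinearMap.mul' ℤ A) ∘ₗ (TensorProduct.map (LinearMap.mulRight ℤ r) LinearMap.id)

lemma sandwL_eq (r : A) (ζ : A ⊗[ℤ] A) : sandwL r ζ = D2.sandw A r ζ := rfl

@[simp] lemma sandwL_tmul (r x y : A) : sandwL r (x ⊗ₜ[ℤ] y) = x * r * y := by
  rfl

lemma sandwL_mapleft (r c : A) (t : A ⊗[ℤ] A) :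
    sandwL r (TensorProduct.map (LinearMap.mulLeft ℤ c) LinearMap.id t)
      = c * sandwL r t := by
  induction t using TensorProduct.induction_on with
  | zero => simp
  | tmul x y => simp [mul_assoc]
  | add u v hu hv => rw [map_add, map_add, hu, hv, map_add, mul_add]

lemma sandwL_descend (B : Subring A) {r : A} (hr : r ∈ Subring.centralizer (B : Set A))
    {ζ ξ : A ⊗[ℤ] A}
    (h : (Submodule.Quotient.mk ζ : D2.TensorSq A B) = Submodule.Quotient.mk ξ) :
    sandwL r ζ = sandwL r ξ := by
  rw [Submodule.Quotient.eq] at h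
  have hker : D2.relSub A B ≤ LinearMap.ker (sandwL r) := by
    rw [D2.relSub, Submodule.span_le]
    rintro x ⟨a, c, b, rfl⟩
    simp only [SetLike.mem_coe, LinearMap.mem_ker, map_sub, sandwL_tmul]
    have : (b : A) * r = r * (b : A) := Subring.mem_centralizer_iff.mp hr b b.2
    rw [mul_assoc a (b : A) r, this]
    rw [sub_eq_zero, mul_assoc, mul_assoc, mul_assoc]
  have := hker h
  rw [LinearMap.mem_ker, map_sub, sub_eq_zero] at this
  exact this

section
variable (ρ : A →ₐ[k] A ⊗[k] H) (B : Subring A)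
    (βf : D2.TensorSq A B →+ (A ⊗[k] H))
    (hβ : ∀ a a' : A, βf (D2.tmulB A B a a') =
      (TensorProduct.map (LinearMap.mulLeft k a) LinearMap.id) (ρ a'))
    (hcoassoc : ∀ a : A,
      (TensorProduct.assoc k A H H) ((LinearMap.rTensor H ρ.toLinearMap) (ρ a)) =
        (LinearMap.lTensor A (Coalgebra.comul (R := k) (A := H))) (ρ a))

include hβ hcoassoc in
lemma βf_pact (p : H →ₗ[k] k) (ζ : A ⊗[ℤ] A) :
    βf (Submodule.Quotient.mk (TensorProduct.map LinearMap.id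
        (LinearMap.restrictScalars ℤ (pactL ρ p)) ζ))
      = LinearMap.lTensor A (Lfun p) (βf (Submodule.Quotient.mk ζ)) := by
  induction ζ using TensorProduct.induction_on with
  | zero => simp
  | tmul x y =>
      rw [TensorProduct.map_tmul]
      simp only [LinearMap.id_apply, LinearMap.restrictScalars_apply]
      rw [βf_tmul ρ B βf hβ, βf_tmul ρ B βf hβ, rho_pactL ρ hcoassoc,
        lTensor_tmul_one_mul]
  | add u v hu hv =>
      rw [map_add, Submodule.Quotient.mk_add, map_add, hu, hv,
        Submodule.Quotient.mk_add, map_add, map_add]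

include hβ in
lemma coeffL_βf_right (p : H →ₗ[k] k) (r : A) (ζ : A ⊗[ℤ] A) :
    coeffL p (βf (Submodule.Quotient.mk
        (TensorProduct.map (LinearMap.mulRight ℤ r) LinearMap.id ζ)))
      = sandwL r (TensorProduct.map LinearMap.id
          (LinearMap.restrictScalars ℤ (pactL ρ p)) ζ) := by
  induction ζ using TensorProduct.induction_on with
  | zero => simp
  | tmul x y =>
      rw [TensorProduct.map_tmul, TensorProduct.map_tmul]
      simp only [LinearMap.mulRight_apply, LinearMap.id_apply,
        LinearMap.restrictScalars_apply]
      rw [βf_tmul ρ B βf hβ, coeffL_tmul_one_mul, sandwL_tmul]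
      rfl
  | add u v hu hv =>
      rw [map_add, Submodule.Quotient.mk_add, map_add, map_add, hu, hv, map_add,
        map_add]

end
end Aux
end

/-- for an `H`-Galois extension, `β` restricts to a bijection
`T = (A ⊗_B A)^B ≅ R ⊗ H`, and the multiplication induced on `R ⊗ H` from `T^op`
(`t t' = t'¹ t¹ ⊗ t² t'²`) is `(r ⊗ h)(r' ⊗ h') = r'(r ◁ h'₍₁₎) ⊗ h h'₍₂₎`; hence
`T^op ≅ R ⋊ H^op`. -/
theorem stmt17 {k : Type*} [Field k] {H : Type*} [Ring H] [HopfAlgebra k H]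
    [FiniteDimensional k H] {A : Type*} [Ring A] [Algebra k A]
    (ρ : A →ₐ[k] A ⊗[k] H)
    (hcounit : ∀ a : A,
      (TensorProduct.rid k A) ((LinearMap.lTensor A (Coalgebra.counit (R := k) (A := H))) (ρ a)) = a)
    (hcoassoc : ∀ a : A,
      (TensorProduct.assoc k A H H) ((LinearMap.rTensor H ρ.toLinearMap) (ρ a)) =
        (LinearMap.lTensor A (Coalgebra.comul (R := k) (A := H))) (ρ a))
    (B : Subring A) (hB : ∀ a : A, a ∈ B ↔ ρ a = a ⊗ₜ[k] 1)
    (βf : D2.TensorSq A B →+ (A ⊗[k] H))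
    (hβ : ∀ a a' : A, βf (D2.tmulB A B a a') =
      (TensorProduct.map (LinearMap.mulLeft k a) LinearMap.id) (ρ a'))
    (hbij : Function.Bijective βf)
    -- the Miyashita-Ulbrich action, characterized by its defining formula
    (act : A → H → A)
    (hact : ∀ (r : A) (h : H) (t : A ⊗[ℤ] A), r ∈ Subring.centralizer (B : Set A) →
      βf (Submodule.Quotient.mk t) = 1 ⊗ₜ[k] h → act r h = D2.sandw A r t) :
    -- β restricts to a bijection T ≅ R ⊗ H
    (∀ ζ : A ⊗[ℤ] A, D2.IsBCentral A B (Submodule.Quotient.mk ζ) ↔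
      βf (Submodule.Quotient.mk ζ) ∈
        LinearMap.range (LinearMap.rTensor H (centralizerSubmodule k B).subtype)) ∧
    -- multiplication formula on R ⊗ H
    (∀ (ζ ζ' : A ⊗[ℤ] A) (r r' : A) (h h' : H),
      D2.IsBCentral A B (Submodule.Quotient.mk ζ) →
      D2.IsBCentral A B (Submodule.Quotient.mk ζ') →
      r ∈ Subring.centralizer (B : Set A) → r' ∈ Subring.centralizer (B : Set A) →
      βf (Submodule.Quotient.mk ζ) = r ⊗ₜ[k] h →
      βf (Submodule.Quotient.mk ζ') = r' ⊗ₜ[k] h' →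
      ∀ (N : ℕ) (h₁ h₂ : Fin N → H),
        Coalgebra.comul (R := k) h' = ∑ i, h₁ i ⊗ₜ[k] h₂ i →
        βf (Submodule.Quotient.mk (D2.mul₂ A ζ' ζ)) =
          ∑ i, (r' * act r (h₁ i)) ⊗ₜ[k] (h * h₂ i)) := by
  classical
  have hinj : Function.Injective βf := hbij.1
  constructor
  · -- Part 1
    intro ζ
    constructor
    · intro hc
      set b := Module.finBasis k H with hb
      set w := βf (Submodule.Quotient.mk ζ) with hw
      have hcomm : ∀ b' ∈ B, ((b' : A) ⊗ₜ[k] (1 : H)) * w = w * ((b' : A) ⊗ₜ[k] (1 : H)) := by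
        intro b' hb'
        have h1 := congrArg βf (hc b' hb')
        rw [Aux.βf_lmul ρ B βf hβ, Aux.βf_rmul ρ B βf hβ, (hB b').mp hb'] at h1
        exact h1
      have hmem : ∀ p : H →ₗ[k] k, Aux.coeffL p w ∈ Subring.centralizer (B : Set A) := by
        intro p
        rw [Subring.mem_centralizer_iff]
        intro g hg
        have h1 := congrArg (Aux.coeffL p) (hcomm g hg)
        rwa [Aux.coeffL_tmul_one_mul, Aux.coeffL_mul_tmul_one] at h1
      refine ⟨∑ i, (⟨Aux.coeffL (b.coord i) w, hmem (b.coord i)⟩ :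
          centralizerSubmodule k B) ⊗ₜ[k] b i, ?_⟩
      rw [map_sum]
      simp only [LinearMap.rTensor_tmul, Submodule.coe_subtype]
      exact (Aux.basis_decomp w).symm
    · rintro ⟨y, hy⟩
      intro b' hb'
      apply hinj
      rw [Aux.βf_lmul ρ B βf hβ, Aux.βf_rmul ρ B βf hβ, (hB b').mp hb', ← hy]
      clear hy
      induction y using TensorProduct.induction_on with
      | zero => simp
      | tmul r₀ g =>
          rw [LinearMap.rTensor_tmul, Submodule.coe_subtype,
            Algebra.TensorProduct.tmul_mul_tmul, Algebra.TensorProduct.tmul_mul_tmul,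
            one_mul, mul_one]
          have : (b' : A) * (r₀ : A) = (r₀ : A) * (b' : A) :=
            Subring.mem_centralizer_iff.mp r₀.2 b' hb'
          rw [this]
      | add u v hu hv => rw [map_add, mul_add, hu, hv, add_mul]
  · -- Part 2
    rintro ζ ζ' r r' h h' hζc hζ'c hr hr' hζ hζ' N h₁ h₂ hΔ
    have hchoice : ∀ i, ∃ u : A ⊗[ℤ] A,
        βf (Submodule.Quotient.mk u) = (1 : A) ⊗ₜ[k] h₁ i := by
      intro i
      obtain ⟨ξ, hξ⟩ := hbij.2 ((1 : A) ⊗ₜ[k] h₁ i)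
      obtain ⟨u, rfl⟩ := Submodule.Quotient.mk_surjective _ ξ
      exact ⟨u, hξ⟩
    choose t ht using hchoice
    have hact' : ∀ i, act r (h₁ i) = D2.sandw A r (t i) :=
      fun i => hact r (h₁ i) (t i) hr (ht i)
    -- Step A
    have stepA : ∀ ζ'' : A ⊗[ℤ] A, βf (Submodule.Quotient.mk (D2.mul₂ A ζ'' ζ))
        = ((1 : A) ⊗ₜ[k] h) * βf (Submodule.Quotient.mk
            (TensorProduct.map (LinearMap.mulRight ℤ r) LinearMap.id ζ'')) := by
      intro ζ''
      induction ζ'' using TensorProduct.induction_on with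
      | zero => simp
      | tmul x y =>
          show βf (Submodule.Quotient.mk (TensorProduct.map (LinearMap.mulLeft ℤ x) (LinearMap.mulRight ℤ y) ζ)) = _
          have hsplit : TensorProduct.map (LinearMap.mulLeft ℤ x) (LinearMap.mulRight ℤ y) ζ
              = TensorProduct.map (LinearMap.mulLeft ℤ x) LinearMap.id
                  (TensorProduct.map LinearMap.id (LinearMap.mulRight ℤ y) ζ) := by
            rw [← LinearMap.comp_apply, ← TensorProduct.map_comp,
              LinearMap.comp_id, LinearMap.id_comp]
          rw [hsplit, Aux.βf_mapleft ρ B βf hβ, Aux.βf_mapright ρ B βf hβ, hζ,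
            TensorProduct.map_tmul]
          simp only [LinearMap.mulRight_apply, LinearMap.id_apply]
          rw [Aux.βf_tmul ρ B βf hβ, ← mul_assoc, ← mul_assoc,
            Algebra.TensorProduct.tmul_mul_tmul, Algebra.TensorProduct.tmul_mul_tmul,
            one_mul, mul_one, one_mul]
      | add u v hu hv =>
          rw [map_add, LinearMap.add_apply, Submodule.Quotient.mk_add, map_add, hu, hv,
            map_add, Submodule.Quotient.mk_add, map_add, mul_add]
    -- Key step
    have key : βf (Submodule.Quotient.mk
        (TensorProduct.map (LinearMap.mulRight ℤ r) LinearMap.id ζ'))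
        = ∑ i, (r' * act r (h₁ i)) ⊗ₜ[k] (h₂ i) := by
      apply Aux.coeffL_ext
      intro p
      rw [Aux.coeffL_βf_right ρ B βf hβ]
      set ξ : A ⊗[ℤ] A :=
        ∑ i, TensorProduct.map (LinearMap.mulLeft ℤ (p (h₂ i) • r')) LinearMap.id (t i)
        with hξdef
      have hβξ : βf (Submodule.Quotient.mk ξ) = ∑ i, (p (h₂ i) • r') ⊗ₜ[k] h₁ i := by
        rw [hξdef, ← Submodule.mkQ_apply, map_sum, map_sum]
        refine Finset.sum_congr rfl fun i _ => ?_
        rw [Submodule.mkQ_apply, Aux.βf_mapleft ρ B βf hβ, ht i,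
          Algebra.TensorProduct.tmul_mul_tmul, mul_one, one_mul]
      have hmkeq : (Submodule.Quotient.mk (TensorProduct.map LinearMap.id
            (LinearMap.restrictScalars ℤ (Aux.pactL ρ p)) ζ') : D2.TensorSq A B)
          = Submodule.Quotient.mk ξ := by
        apply hinj
        rw [Aux.βf_pact ρ B βf hβ hcoassoc, hζ', hβξ, LinearMap.lTensor_tmul]
        have hL : Aux.Lfun p h' = ∑ i, p (h₂ i) • h₁ i := by
          rw [Aux.Lfun]
          simp only [LinearMap.comp_apply, LinearEquiv.coe_coe]
          rw [hΔ, map_sum, map_sum]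
          refine Finset.sum_congr rfl fun i _ => ?_
          rw [LinearMap.lTensor_tmul]
          simp
        rw [hL, tmul_sum]
        refine Finset.sum_congr rfl fun i _ => ?_
        rw [tmul_smul, smul_tmul']
      rw [Aux.sandwL_descend B hr hmkeq, hξdef, map_sum, map_sum]
      refine Finset.sum_congr rfl fun i _ => ?_
      rw [Aux.sandwL_mapleft, Aux.sandwL_eq, ← hact' i, Aux.coeffL_tmul,
        smul_mul_assoc]
    rw [stepA ζ', key, Finset.mul_sum]
    refine Finset.sum_congr rfl fun i _ => ?_
    rw [Algebra.TensorProduct.tmul_mul_tmul, one_mul]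

end
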